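/- arXiv:1010.5564 — 3 statements merged into one kernel-verified Lean document; each statement's English description precedes it below -/
import Mathlib

section
/- Let m ≥ 3 and let A ∈ 𝐔_m be an F_m-matrix (A has entries in {0, 1/2, 1}, the full index set is saturated, and no proper nonempty subset is saturated). Then A is not an extreme point of 𝐔_m. -/
open Matrix Finset

def IsInU {m : ℕ} (A : Matrix (Fin m) (Fin m) ℝ) : Prop :=
  A.IsSymm ∧ (∀ i j, 0 ≤ A i j) ∧
    ∀ α : Finset (Fin m), ∑ i ∈ α, ∑ j ∈ α, A i j ≤ (α.card : ℝ)

def IsInUtop {m : ℕ} (A : Matrix (Fin m) (Fin m) ℝ) : Prop :=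
  IsInU A ∧ ∑ i, ∑ j, A i j = (m : ℝ)

def IsExtremeIn {m : ℕ} (S : Matrix (Fin m) (Fin m) ℝ → Prop)
    (A : Matrix (Fin m) (Fin m) ℝ) : Prop :=
  S A ∧ ∀ A₁ A₂, S A₁ → S A₂ → A₁ + A₂ = (2 : ℝ) • A → A₁ = A ∧ A₂ = A

def IsRowStochastic {m : ℕ} (X : Matrix (Fin m) (Fin m) ℝ) : Prop :=
  (∀ i j, 0 ≤ X i j) ∧ ∀ i, ∑ j, X i j = 1

def IsSubstochastic {m : ℕ} (X : Matrix (Fin m) (Fin m) ℝ) : Prop :=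
  (∀ i j, 0 ≤ X i j) ∧ ∀ i, ∑ j, X i j ≤ 1

/-!
A total mass `m ≥ 3` cannot sit on the two symmetric positions `(i, j), (j, i)` of a single
entry, because the principal block on `{i, j}` carries at most `2`. So `A` is positive at two
positions with `{i, j} ≠ {k, l}`, and moving a small mass `ε` from one to the other, in either
direction, keeps `A` symmetric and nonnegative and keeps its total sum. The proper nonempty
index sets are unsaturated and finite in number, so they all have room for `ε`; hence `A` is
the midpoint of two distinct points of `𝐔_m`.
-/

lemma exists_pos_add_le_of_forall_lt {ι : Type*} [Finite ι] {P : ι → Prop} {f g : ι → ℝ}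
    (h : ∀ i, P i → f i < g i) : ∃ δ > 0, ∀ i, P i → f i + δ ≤ g i := by
  have hev : ∀ᶠ δ in nhdsWithin (0 : ℝ) (Set.Ioi 0), ∀ i, P i → f i + δ ≤ g i := by
    refine Filter.eventually_all.2 fun i => ?_
    by_cases hi : P i
    · filter_upwards [Ioo_mem_nhdsGT (sub_pos.2 (h i hi))] with δ hδ _
      linarith [hδ.2]
    · exact Filter.Eventually.of_forall fun _ h => absurd h hi
  obtain ⟨δ, hδ, hpos⟩ := (hev.and self_mem_nhdsWithin).exists
  exact ⟨δ, hpos, hδ⟩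

section SymmSingle

variable {n : Type*} [DecidableEq n]

noncomputable def symmSingle (i j : n) : Matrix n n ℝ :=
  (2⁻¹ : ℝ) • (single i j 1 + single j i 1)

lemma symmSingle_apply (i j x y : n) :
    symmSingle i j x y
      = 2⁻¹ * ((if i = x ∧ j = y then 1 else 0) + (if j = x ∧ i = y then 1 else 0)) := by
  simp [symmSingle, single_apply]

lemma symmSingle_isSymm (i j : n) : (symmSingle i j).IsSymm := by
  refine IsSymm.ext fun x y => ?_
  simp only [symmSingle_apply]
  rw [add_comm]
  simp only [and_comm]

lemma symmSingle_nonneg (i j x y : n) : 0 ≤ symmSingle i j x y := by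
  rw [symmSingle_apply]
  positivity

lemma sum_symmSingle [Fintype n] (i j : n) : ∑ x, ∑ y, symmSingle i j x y = 1 := by
  norm_num [symmSingle_apply, mul_add, sum_add_distrib, ite_and]

lemma sum_sum_symmSingle_le [Fintype n] (i j : n) (α : Finset n) :
    ∑ x ∈ α, ∑ y ∈ α, symmSingle i j x y ≤ 1 :=
  calc ∑ x ∈ α, ∑ y ∈ α, symmSingle i j x y ≤ ∑ x, ∑ y, symmSingle i j x y :=
        (sum_le_sum fun x _ => sum_le_univ_sum_of_nonneg fun y => symmSingle_nonneg i j x y).trans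
          (sum_le_univ_sum_of_nonneg fun x => sum_nonneg fun y _ => symmSingle_nonneg i j x y)
    _ = 1 := sum_symmSingle i j

lemma symmSingle_apply_self_pos (i j : n) : 0 < symmSingle i j i j := by
  simp only [symmSingle_apply, and_self, if_true]
  positivity

lemma symmSingle_apply_eq_zero {i j k l : n} (h : s(k, l) ≠ s(i, j)) :
    symmSingle i j k l = 0 := by
  rw [Ne, Sym2.eq_iff] at h
  rw [symmSingle_apply]
  split_ifs <;> simp_all

lemma mul_symmSingle_apply_le {A : Matrix n n ℝ} (hA : A.IsSymm) (hnn : ∀ x y, 0 ≤ A x y)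
    {i j : n} {ε : ℝ} (hε : ε ≤ A i j) (x y : n) : ε * symmSingle i j x y ≤ A x y := by
  have hji : ε ≤ A j i := hA.apply i j ▸ hε
  rw [symmSingle_apply]
  split_ifs with h₁ h₂ h₂
  · obtain ⟨rfl, rfl⟩ := h₁; linarith
  · obtain ⟨rfl, rfl⟩ := h₁; linarith [hnn i j]
  · obtain ⟨rfl, rfl⟩ := h₂; linarith [hnn j i]
  · simpa using hnn x y

end SymmSingle

lemma sum_sum_eq_sum_sum_of_support_subset {n : Type*} [Fintype n] {A : Matrix n n ℝ}
    {α : Finset n} (h : ∀ x y, A x y ≠ 0 → x ∈ α ∧ y ∈ α) :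
    ∑ x, ∑ y, A x y = ∑ x ∈ α, ∑ y ∈ α, A x y := by
  rw [← sum_subset (subset_univ α) fun x _ hx =>
    sum_eq_zero fun y _ => not_not.1 fun hxy => hx (h x y hxy).1]
  exact sum_congr rfl fun x _ =>
    (sum_subset (subset_univ α) fun y _ hy => not_not.1 fun hxy => hy (h x y hxy).2).symm

lemma IsExtremeIn.eq_of_add_of_sub {m : ℕ} {S : Matrix (Fin m) (Fin m) ℝ → Prop}
    {A D : Matrix (Fin m) (Fin m) ℝ} (hA : IsExtremeIn S A) (h₁ : S (A + D))
    (h₂ : S (A - D)) : D = 0 := by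
  have h := (hA.2 _ _ h₁ h₂ (by rw [two_smul]; abel)).1
  simpa using h

variable {m : ℕ}

lemma IsInU.exists_two_pos_entries_of_sum_eq {A : Matrix (Fin m) (Fin m) ℝ} (hA : IsInU A)
    (hm : 3 ≤ m) (hsat : ∑ i, ∑ j, A i j = m) :
    ∃ i j k l, 0 < A i j ∧ 0 < A k l ∧ s(k, l) ≠ s(i, j) := by
  have hm' : (3 : ℝ) ≤ m := by exact_mod_cast hm
  obtain ⟨i, j, hij⟩ : ∃ i j, 0 < A i j := by
    by_contra! h
    have := sum_nonpos fun i (_ : i ∈ univ) => sum_nonpos fun j (_ : j ∈ univ) => h i j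
    linarith
  by_contra! hone
  set β : Finset (Fin m) := {i, j}
  have hsupp : ∀ x y, A x y ≠ 0 → x ∈ β ∧ y ∈ β := by
    intro x y hxy
    have := Sym2.eq_iff.1 (hone i j x y hij ((hA.2.1 x y).lt_of_ne' hxy))
    rcases this with ⟨rfl, rfl⟩ | ⟨rfl, rfl⟩ <;> simp [β]
  have hblock := hA.2.2 β
  rw [← sum_sum_eq_sum_sum_of_support_subset hsupp, hsat] at hblock
  have : (β.card : ℝ) ≤ 2 := by exact_mod_cast card_le_two
  linarith

lemma IsInU.add_smul_symmSingle_sub {A : Matrix (Fin m) (Fin m) ℝ} (hA : IsInU A) {δ ε : ℝ}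
    (hslack : ∀ α : Finset (Fin m), α.Nonempty ∧ α ≠ univ →
      ∑ x ∈ α, ∑ y ∈ α, A x y + δ ≤ α.card)
    (hε : 0 ≤ ε) (hεδ : ε ≤ δ) (i j k l : Fin m) (hkl : ε ≤ A k l) :
    IsInU (A + ε • (symmSingle i j - symmSingle k l)) := by
  obtain ⟨hsymm, hnn, hsub⟩ := hA
  refine ⟨hsymm.add (((symmSingle_isSymm i j).sub (symmSingle_isSymm k l)).smul ε),
    fun x y => ?_, fun α => ?_⟩
  · have := mul_symmSingle_apply_le hsymm hnn hkl x y
    have := mul_nonneg hε (symmSingle_nonneg i j x y)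
    simp only [Matrix.add_apply, Matrix.smul_apply, Matrix.sub_apply, smul_eq_mul]
    linarith
  · have hsplit : ∑ x ∈ α, ∑ y ∈ α, (A + ε • (symmSingle i j - symmSingle k l)) x y
        = ∑ x ∈ α, ∑ y ∈ α, A x y + ε * (∑ x ∈ α, ∑ y ∈ α, symmSingle i j x y
          - ∑ x ∈ α, ∑ y ∈ α, symmSingle k l x y) := by
      simp only [Matrix.add_apply, Matrix.smul_apply, Matrix.sub_apply, smul_eq_mul,
        sum_add_distrib, ← mul_sum, sum_sub_distrib]
    rw [hsplit]
    rcases α.eq_empty_or_nonempty with rfl | hne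
    · simp
    by_cases huniv : α = univ
    · subst huniv
      simpa [sum_symmSingle] using hsub univ
    · have := sum_sum_symmSingle_le i j α
      have := sum_nonneg fun x (_ : x ∈ α) =>
        sum_nonneg fun y (_ : y ∈ α) => symmSingle_nonneg k l x y
      have := hslack α ⟨hne, huniv⟩
      nlinarith

theorem stmt_13_general {m : ℕ} (hm : 3 ≤ m) (A : Matrix (Fin m) (Fin m) ℝ)
    (hA : IsInU A)
    (hsat : ∑ i, ∑ j, A i j = (m : ℝ))
    (hnosat : ∀ α : Finset (Fin m), α.Nonempty → α ≠ Finset.univ →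
      ∑ i ∈ α, ∑ j ∈ α, A i j ≠ (α.card : ℝ)) :
    ¬ IsExtremeIn IsInU A := by
  intro hext
  obtain ⟨i, j, k, l, hij, hkl, hne⟩ := hA.exists_two_pos_entries_of_sum_eq hm hsat
  obtain ⟨δ, hδ, hslack⟩ :=
    exists_pos_add_le_of_forall_lt fun α (hα : α.Nonempty ∧ α ≠ univ) =>
      (hA.2.2 α).lt_of_ne (hnosat α hα.1 hα.2)
  set ε := min δ (min (A i j) (A k l))
  have hε : 0 < ε := lt_min hδ (lt_min hij hkl)
  have h₁ := hA.add_smul_symmSingle_sub hslack hε.le (min_le_left _ _) i j k l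
    ((min_le_right _ _).trans (min_le_right _ _))
  have h₂ := hA.add_smul_symmSingle_sub hslack hε.le (min_le_left _ _) k l i j
    ((min_le_right _ _).trans (min_le_left _ _))
  rw [← neg_sub, smul_neg, ← sub_eq_add_neg] at h₂
  have hD := congrFun (congrFun (hext.eq_of_add_of_sub h₁ h₂) i) j
  simp only [Matrix.smul_apply, Matrix.sub_apply, symmSingle_apply_eq_zero hne.symm, sub_zero,
    smul_eq_mul, Matrix.zero_apply, mul_eq_zero, hε.ne', false_or] at hD
  exact (symmSingle_apply_self_pos i j).ne' hD

theorem stmt_13 {m : ℕ} (hm : 3 ≤ m) (A : Matrix (Fin m) (Fin m) ℝ)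
    (hA : IsInU A)
    (hval : ∀ i j, A i j = 0 ∨ A i j = 1/2 ∨ A i j = 1)
    (hsat : ∑ i, ∑ j, A i j = (m : ℝ))
    (hnosat : ∀ α : Finset (Fin m), α.Nonempty → α ≠ Finset.univ →
      ∑ i ∈ α, ∑ j ∈ α, A i j ≠ (α.card : ℝ)) :
    ¬ IsExtremeIn IsInU A :=
  stmt_13_general hm A hA hsat hnosat
end

section
/- Let A be an extreme point of 𝐔_m with ∑_{i,j=1}^m a_{ij} = m (i.e., A ∈ Extr 𝐔_m is saturated). Then every row of A contains at least one nonzero entry. Conversely, if A is an extreme point of 𝐔_m and every row of A contains at least one nonzero entry, then ∑_{i,j=1}^m a_{ij} = m. -/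
/-
Tight sets (those α with ∑_{i,j∈α} a_{ij} = |α|) of a matrix in 𝐔_m are closed under unions, since
α ↦ ∑_{i,j∈α} a_{ij} is supermodular for nonnegative A. If A is extreme and a_{ij} > 0, then i lies in
a tight set: otherwise all constraints through i have slack, and A ± ε(e_{ij} + e_{ji}) both lie in
𝐔_m. Hence when no row vanishes the union of these tight sets, {1,…,m}, is tight. Conversely a zero
row i of a saturated A would give ∑_{j,k≠i} a_{jk} = m > m - 1.
-/

open Matrix Finset

def principalSum {n R : Type*} [AddCommMonoid R] (A : Matrix n n R) (s : Finset n) : R :=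
  ∑ i ∈ s, ∑ j ∈ s, A i j

section principalSum

variable {n R : Type*}

theorem principalSum_eq_sum_product [AddCommMonoid R] (A : Matrix n n R) (s : Finset n) :
    principalSum A s = ∑ p ∈ s ×ˢ s, A p.1 p.2 :=
  (sum_product s s fun p => A p.1 p.2).symm

theorem principalSum_add [AddCommMonoid R] (A B : Matrix n n R) (s : Finset n) :
    principalSum (A + B) s = principalSum A s + principalSum B s := by
  simp only [principalSum, Matrix.add_apply, sum_add_distrib]

theorem principalSum_neg [AddCommGroup R] (A : Matrix n n R) (s : Finset n) :
    principalSum (-A) s = -principalSum A s := by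
  simp only [principalSum, Matrix.neg_apply, sum_neg_distrib]

theorem principalSum_smul [NonUnitalNonAssocSemiring R] (c : R) (A : Matrix n n R)
    (s : Finset n) : principalSum (c • A) s = c * principalSum A s := by
  simp only [principalSum, Matrix.smul_apply, smul_eq_mul, mul_sum]

variable [DecidableEq n]

theorem principalSum_single [AddCommMonoid R] (i j : n) (c : R) (s : Finset n) :
    principalSum (Matrix.single i j c) s = if i ∈ s ∧ j ∈ s then c else 0 := by
  simp only [principalSum, Matrix.single_apply, ite_and, sum_ite_irrel, sum_const_zero, sum_ite_eq]

theorem principalSum_erase_of_row_eq_zero [AddCommMonoid R] {A : Matrix n n R} (hA : A.IsSymm)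
    {i : n} (hi : ∀ j, A i j = 0) (s : Finset n) :
    principalSum A (s.erase i) = principalSum A s := by
  have hcol : ∀ j, A j i = 0 := fun j => (hA.apply i j).trans (hi j)
  rw [principalSum, sum_erase s (sum_eq_zero fun j _ => hi j)]
  exact sum_congr rfl fun j _ => sum_erase s (hcol j)

theorem principalSum_add_principalSum_le [AddCommMonoid R] [PartialOrder R] [IsOrderedAddMonoid R]
    {A : Matrix n n R} (hA : ∀ i j, 0 ≤ A i j) (s t : Finset n) :
    principalSum A s + principalSum A t ≤ principalSum A (s ∪ t) + principalSum A (s ∩ t) := by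
  simp only [principalSum_eq_sum_product]
  rw [← product_inter_product, ← sum_union_inter]
  gcongr
  · exact fun p _ _ => hA p.1 p.2
  · exact union_subset (product_subset_product subset_union_left subset_union_left)
      (product_subset_product subset_union_right subset_union_right)

theorem principalSum_single_add_single [AddCommMonoid R] (i j : n) (c : R) (s : Finset n) :
    principalSum (Matrix.single i j c + Matrix.single j i c) s =
      if i ∈ s ∧ j ∈ s then c + c else 0 := by
  simp only [principalSum_add, principalSum_single, and_comm (a := j ∈ s)]
  split_ifs <;> simp

theorem abs_smul_single_add_single_apply_le {A : Matrix n n ℝ} (hA : A.IsSymm)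
    (hpos : ∀ a b, 0 ≤ A a b) {i j : n} {ε : ℝ} (hε : 0 ≤ ε) (hεA : 2 * ε ≤ A i j) (a b : n) :
    |(ε • (Matrix.single i j 1 + Matrix.single j i 1) : Matrix n n ℝ) a b| ≤ A a b := by
  have hji : A j i = A i j := hA.apply i j
  simp only [Matrix.smul_apply, Matrix.add_apply, Matrix.single_apply, smul_eq_mul]
  split_ifs with h₁ h₂ h₂
  · obtain ⟨rfl, rfl⟩ := h₁
    rw [abs_of_nonneg (by positivity)]
    linarith
  · obtain ⟨rfl, rfl⟩ := h₁
    rw [abs_of_nonneg (by positivity)]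
    linarith
  · obtain ⟨rfl, rfl⟩ := h₂
    rw [abs_of_nonneg (by positivity)]
    linarith
  · simpa using hpos a b

end principalSum

def IsTight {m : ℕ} (A : Matrix (Fin m) (Fin m) ℝ) (s : Finset (Fin m)) : Prop :=
  principalSum A s = s.card

namespace IsInU

variable {m : ℕ} {A : Matrix (Fin m) (Fin m) ℝ}

theorem principalSum_le (hA : IsInU A) (s : Finset (Fin m)) : principalSum A s ≤ s.card :=
  hA.2.2 s

theorem isTight_union (hA : IsInU A) {s t : Finset (Fin m)} (hs : IsTight A s)
    (ht : IsTight A t) : IsTight A (s ∪ t) := by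
  have hsuper := principalSum_add_principalSum_le hA.2.1 s t
  have hcard : ((s ∪ t).card : ℝ) + (s ∩ t).card = s.card + t.card := by
    exact_mod_cast card_union_add_card_inter s t
  unfold IsTight at *
  linarith [hA.principalSum_le (s ∪ t), hA.principalSum_le (s ∩ t)]

theorem isTight_univ (hA : IsInU A) (h : ∀ i, ∃ s, i ∈ s ∧ IsTight A s) : IsTight A univ := by
  choose T hmem hT using h
  have hsup : univ.sup T = univ := eq_univ_of_forall fun i => le_sup (f := T) (mem_univ i) (hmem i)
  rw [← hsup]
  exact sup_induction (by simp [IsTight, principalSum]) (fun s hs t ht => hA.isTight_union hs ht)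
    fun i _ => hT i

theorem exists_slack (hA : IsInU A) {i : Fin m} (h : ∀ s, i ∈ s → ¬IsTight A s) :
    ∃ δ > 0, ∀ s, i ∈ s → principalSum A s + δ ≤ s.card := by
  obtain ⟨s₀, hs₀, hmin⟩ := exists_min_image (univ.filter (i ∈ ·))
    (fun s => (s.card : ℝ) - principalSum A s) ⟨{i}, by simp⟩
  simp only [mem_filter, mem_univ, true_and] at hs₀ hmin
  refine ⟨s₀.card - principalSum A s₀, ?_, fun s hs => by linarith [hmin s hs]⟩
  exact sub_pos.2 <| (hA.principalSum_le s₀).lt_of_ne (h s₀ hs₀)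

theorem add_of_abs_le (hA : IsInU A) {E : Matrix (Fin m) (Fin m) ℝ} (hE : E.IsSymm)
    (hentry : ∀ i j, |E i j| ≤ A i j)
    (hblock : ∀ s, |principalSum E s| ≤ s.card - principalSum A s) : IsInU (A + E) := by
  refine ⟨hA.1.add hE, fun i j => ?_, fun s => ?_⟩
  · linarith [Matrix.add_apply A E i j, neg_abs_le (E i j), hentry i j]
  · change principalSum (A + E) s ≤ s.card
    linarith [principalSum_add A E s, le_abs_self (principalSum E s), hblock s]

theorem sub_of_abs_le (hA : IsInU A) {E : Matrix (Fin m) (Fin m) ℝ} (hE : E.IsSymm)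
    (hentry : ∀ i j, |E i j| ≤ A i j)
    (hblock : ∀ s, |principalSum E s| ≤ s.card - principalSum A s) : IsInU (A - E) := by
  rw [sub_eq_add_neg]
  refine hA.add_of_abs_le hE.neg (fun i j => ?_) fun s => ?_
  · simpa only [Matrix.neg_apply, abs_neg] using hentry i j
  · simpa only [principalSum_neg, abs_neg] using hblock s

end IsInU

theorem IsExtremeIn.eq_zero_of_add_of_sub {m : ℕ} {S : Matrix (Fin m) (Fin m) ℝ → Prop}
    {A E : Matrix (Fin m) (Fin m) ℝ} (hA : IsExtremeIn S A) (hadd : S (A + E))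
    (hsub : S (A - E)) : E = 0 := by
  have hsum : A + E + (A - E) = (2 : ℝ) • A := by rw [two_smul]; abel
  simpa using (hA.2 _ _ hadd hsub hsum).1

theorem IsExtremeIn.exists_isTight_mem {m : ℕ} {A : Matrix (Fin m) (Fin m) ℝ}
    (hA : IsExtremeIn IsInU A) {i j : Fin m} (hij : A i j ≠ 0) : ∃ s, i ∈ s ∧ IsTight A s := by
  by_contra! hslack
  obtain ⟨δ, hδ, hδA⟩ := hA.1.exists_slack hslack
  have hAij : 0 < A i j := (hA.1.2.1 i j).lt_of_ne' hij
  obtain ⟨ε, hε, hεA, hεδ⟩ : ∃ ε > 0, 2 * ε ≤ A i j ∧ 2 * ε ≤ δ :=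
    ⟨min (A i j) δ / 2, by positivity, by linarith [min_le_left (A i j) δ],
      by linarith [min_le_right (A i j) δ]⟩
  set E := ε • (Matrix.single i j (1 : ℝ) + Matrix.single j i 1)
  have hE : E.IsSymm := by
    refine IsSymm.smul ?_ ε
    simpa only [transpose_single] using isSymm_add_transpose_self (Matrix.single i j (1 : ℝ))
  have hentry := abs_smul_single_add_single_apply_le hA.1.1 hA.1.2.1 hε.le hεA
  have hblock : ∀ s, |principalSum E s| ≤ s.card - principalSum A s := by
    intro s
    rw [principalSum_smul, principalSum_single_add_single]
    split_ifs with hs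
    · rw [abs_of_nonneg (by positivity)]
      linarith [hδA s hs.1]
    · simpa using hA.1.principalSum_le s
  have hE0 : E = 0 := hA.eq_zero_of_add_of_sub (hA.1.add_of_abs_le hE hentry hblock)
    (hA.1.sub_of_abs_le hE hentry hblock)
  have hEij := congrFun (congrFun hE0 i) j
  simp only [E, Matrix.smul_apply, Matrix.add_apply, single_apply_same, Matrix.single_apply,
    Matrix.zero_apply, smul_eq_mul] at hEij
  split_ifs at hEij <;> linarith

theorem IsInU.exists_ne_zero_of_saturated {m : ℕ} {A : Matrix (Fin m) (Fin m) ℝ} (hA : IsInU A)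
    (hsat : ∑ i, ∑ j, A i j = (m : ℝ)) (i : Fin m) : ∃ j, A i j ≠ 0 := by
  by_contra! hi
  have hle := hA.principalSum_le (univ.erase i)
  rw [principalSum_erase_of_row_eq_zero hA.1 hi, card_erase_of_mem (mem_univ i), card_univ,
    Fintype.card_fin, Nat.cast_pred (Fin.pos i)] at hle
  have htotal : principalSum A univ = m := hsat
  linarith

theorem stmt_17 {m : ℕ} (A : Matrix (Fin m) (Fin m) ℝ)
    (hA : IsExtremeIn IsInU A) :
    ∑ i, ∑ j, A i j = (m : ℝ) ↔ ∀ i, ∃ j, A i j ≠ 0 := by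
  refine ⟨hA.1.exists_ne_zero_of_saturated, fun hrows => ?_⟩
  choose j hj using hrows
  simpa [IsTight, principalSum] using hA.1.isTight_univ fun i => hA.exists_isTight_mem (hj i)
end

section
/- For every matrix A ∈ 𝐔_m, there exists a matrix B ∈ 𝐔^{m+1} (an (m+1)×(m+1) symmetric matrix in 𝐔_{m+1} with total entry sum m+1) whose top-left m×m principal submatrix equals A. -/
open Matrix Finset

/-!
Bordering `A` by a column `x / 2` and a diagonal entry `1` turns the constraints of `𝐔_{m+1}`
into `x ≥ 0`, `∑_{i ∈ β} x i ≤ g β` for every `β`, and `∑ i, x i = g univ`, where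
`g β = |β| - ∑_{i,j ∈ β} A i j`. Since `A ≥ 0`, `g` is submodular, and `g ≥ 0` because `A ∈ 𝐔_m`.
Replacing `g` by its monotone envelope `h β = min_{γ ⊇ β} g γ` keeps submodularity and the value
at `univ`, and Edmonds' greedy vector `x i = h (Iic i) - h (Iio i)` of the monotone submodular `h`
has exactly the required properties.
-/

section SetFunction

variable {ι : Type*}

def IsSubmodular [DecidableEq ι] (g : Finset ι → ℝ) : Prop :=
  ∀ s t, g (s ∪ t) + g (s ∩ t) ≤ g s + g t

section Envelope

variable [DecidableEq ι] [Fintype ι]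

noncomputable def monotoneEnvelope (g : Finset ι → ℝ) (s : Finset ι) : ℝ :=
  ({γ | s ⊆ γ} : Finset (Finset ι)).inf' ⟨univ, by simp⟩ g

variable {g : Finset ι → ℝ}

theorem monotoneEnvelope_le {s γ : Finset ι} (h : s ⊆ γ) : monotoneEnvelope g s ≤ g γ :=
  inf'_le _ (by simpa using h)

theorem exists_monotoneEnvelope_eq (s : Finset ι) :
    ∃ γ, s ⊆ γ ∧ monotoneEnvelope g s = g γ := by
  obtain ⟨γ, hγ, heq⟩ := exists_mem_eq_inf' ⟨univ, by simp⟩ g (s := {γ | s ⊆ γ})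
  exact ⟨γ, by simpa using hγ, heq⟩

theorem monotone_monotoneEnvelope : Monotone (monotoneEnvelope g) := fun s t hst ↦ by
  obtain ⟨γ, htγ, heq⟩ := exists_monotoneEnvelope_eq (g := g) t
  exact heq ▸ monotoneEnvelope_le (hst.trans htγ)

theorem monotoneEnvelope_univ : monotoneEnvelope g univ = g univ := by
  obtain ⟨γ, hγ, heq⟩ := exists_monotoneEnvelope_eq (g := g) univ
  rwa [univ_subset_iff.mp hγ] at heq

theorem monotoneEnvelope_nonneg (hg : ∀ s, 0 ≤ g s) (s : Finset ι) :
    0 ≤ monotoneEnvelope g s := by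
  obtain ⟨γ, -, heq⟩ := exists_monotoneEnvelope_eq (g := g) s
  exact heq ▸ hg γ

theorem monotoneEnvelope_empty (hg : ∀ s, 0 ≤ g s) (hempty : g ∅ = 0) :
    monotoneEnvelope g ∅ = 0 :=
  le_antisymm (hempty ▸ monotoneEnvelope_le subset_rfl) (monotoneEnvelope_nonneg hg ∅)

theorem isSubmodular_monotoneEnvelope (hg : IsSubmodular g) :
    IsSubmodular (monotoneEnvelope g) := fun s t ↦ by
  obtain ⟨γ, hsγ, hs⟩ := exists_monotoneEnvelope_eq (g := g) s
  obtain ⟨δ, htδ, ht⟩ := exists_monotoneEnvelope_eq (g := g) t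
  have hunion := monotoneEnvelope_le (g := g) (union_subset_union hsγ htδ)
  have hinter := monotoneEnvelope_le (g := g) (inter_subset_inter hsγ htδ)
  linarith [hg γ δ]

end Envelope

section Greedy

variable [LinearOrder ι] [LocallyFiniteOrderBot ι] (h : Finset ι → ℝ)

def greedyVector (i : ι) : ℝ := h (Iic i) - h (Iio i)

variable {h}

theorem greedyVector_nonneg (hmono : Monotone h) (i : ι) : 0 ≤ greedyVector h i :=
  sub_nonneg.mpr (hmono Iio_subset_Iic_self)

theorem sum_greedyVector_le (hsub : IsSubmodular h) (hempty : 0 ≤ h ∅) (s : Finset ι) :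
    ∑ i ∈ s, greedyVector h i ≤ h s := by
  induction s using Finset.induction_on_max with
  | empty => simpa using hempty
  | insert a s hlt ih =>
    have hs : s ⊆ Iio a := fun x hx ↦ mem_Iio.mpr (hlt x hx)
    have hunion : insert a s ∪ Iio a = Iic a := by
      rw [insert_union, union_eq_right.mpr hs, Iio_insert]
    have hinter : insert a s ∩ Iio a = s := by
      rw [insert_inter_of_notMem notMem_Iio_self, inter_eq_left.mpr hs]
    have hstep := hsub (insert a s) (Iio a)
    rw [hunion, hinter] at hstep
    rw [sum_insert fun ha ↦ (hlt a ha).false, greedyVector]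
    linarith

theorem sum_greedyVector_of_isLowerSet (hempty : h ∅ = 0) {s : Finset ι}
    (hs : IsLowerSet (s : Set ι)) : ∑ i ∈ s, greedyVector h i = h s := by
  induction s using Finset.induction_on_max with
  | empty => simpa using hempty.symm
  | insert a s hlt ih =>
    have hIio : s = Iio a := by
      ext x
      refine ⟨fun hx ↦ mem_Iio.mpr (hlt x hx), fun hx ↦ ?_⟩
      have hx' := hs (mem_Iio.mp hx).le (by simp)
      simpa [(mem_Iio.mp hx).ne] using hx'
    subst hIio
    rw [sum_insert notMem_Iio_self, ih (by simpa using isLowerSet_Iio a), Iio_insert,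
      greedyVector]
    ring

theorem sum_univ_greedyVector [Fintype ι] (hempty : h ∅ = 0) :
    ∑ i, greedyVector h i = h univ :=
  sum_greedyVector_of_isLowerSet hempty (by simpa using isLowerSet_univ)

end Greedy

theorem exists_nonneg_base_of_isSubmodular [LinearOrder ι] [Fintype ι] [LocallyFiniteOrderBot ι]
    {g : Finset ι → ℝ} (hg : IsSubmodular g) (hnonneg : ∀ s, 0 ≤ g s) (hempty : g ∅ = 0) :
    ∃ x : ι → ℝ, (∀ i, 0 ≤ x i) ∧ (∀ s, ∑ i ∈ s, x i ≤ g s) ∧ ∑ i, x i = g univ := by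
  have hh₀ := monotoneEnvelope_empty hnonneg hempty
  refine ⟨greedyVector (monotoneEnvelope g), greedyVector_nonneg monotone_monotoneEnvelope,
    fun s ↦ ?_, ?_⟩
  · exact (sum_greedyVector_le (isSubmodular_monotoneEnvelope hg) hh₀.ge s).trans
      (monotoneEnvelope_le subset_rfl)
  · rw [sum_univ_greedyVector hh₀, monotoneEnvelope_univ]

end SetFunction

section Matrix

theorem sum_sum_add_sum_sum_le_union_add_inter {ι : Type*} [DecidableEq ι] {A : Matrix ι ι ℝ}
    (hA : ∀ i j, 0 ≤ A i j) (s t : Finset ι) :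
    ∑ i ∈ s, ∑ j ∈ s, A i j + ∑ i ∈ t, ∑ j ∈ t, A i j ≤
      ∑ i ∈ s ∪ t, ∑ j ∈ s ∪ t, A i j + ∑ i ∈ s ∩ t, ∑ j ∈ s ∩ t, A i j := by
  simp only [← sum_product' (f := A)]
  rw [← sum_union_inter, product_inter_product]
  gcongr
  · exact fun p _ _ ↦ hA p.1 p.2
  · exact union_subset (product_subset_product subset_union_left subset_union_left)
      (product_subset_product subset_union_right subset_union_right)

theorem isSubmodular_card_sub_sum_sum {ι : Type*} [DecidableEq ι] {A : Matrix ι ι ℝ}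
    (hA : ∀ i j, 0 ≤ A i j) :
    IsSubmodular fun s : Finset ι ↦ (#s : ℝ) - ∑ i ∈ s, ∑ j ∈ s, A i j := fun s t ↦ by
  have hcard : (#(s ∪ t) : ℝ) + #(s ∩ t) = #s + #t := by
    exact_mod_cast card_union_add_card_inter s t
  linarith [sum_sum_add_sum_sum_le_union_add_inter hA s t]

variable {m : ℕ} {α : Finset (Fin (m + 1))} {β : Finset (Fin m)}

theorem Fin.sum_eq_sum_castSucc_add {M : Type*} [AddCommMonoid M]
    (hβ : ∀ i, i ∈ β ↔ i.castSucc ∈ α) (F : Fin (m + 1) → M) :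
    ∑ i ∈ α, F i = ∑ i ∈ β, F i.castSucc + if Fin.last m ∈ α then F (Fin.last m) else 0 := by
  conv_lhs => rw [← filter_univ_mem α, sum_filter, Fin.sum_univ_castSucc, ← sum_filter]
  congr 2
  ext i
  simp [hβ]

theorem Fin.card_eq_card_castSucc_add (hβ : ∀ i, i ∈ β ↔ i.castSucc ∈ α) :
    (#α : ℝ) = #β + if Fin.last m ∈ α then 1 else 0 := by
  simp only [cast_card, Fin.sum_eq_sum_castSucc_add hβ]

def bordered (A : Matrix (Fin m) (Fin m) ℝ) (v : Fin m → ℝ) (d : ℝ) :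
    Matrix (Fin (m + 1)) (Fin (m + 1)) ℝ :=
  Matrix.of fun i j ↦
    Fin.lastCases (Fin.lastCases d v j) (fun i' ↦ Fin.lastCases (v i') (A i') j) i

variable (A : Matrix (Fin m) (Fin m) ℝ) (v : Fin m → ℝ) (d : ℝ)

@[simp] theorem bordered_castSucc_castSucc (i j : Fin m) :
    bordered A v d i.castSucc j.castSucc = A i j := by
  simp [bordered]

@[simp] theorem bordered_castSucc_last (i : Fin m) :
    bordered A v d i.castSucc (Fin.last m) = v i := by
  simp [bordered]

@[simp] theorem bordered_last_castSucc (j : Fin m) :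
    bordered A v d (Fin.last m) j.castSucc = v j := by
  simp [bordered]

@[simp] theorem bordered_last_last : bordered A v d (Fin.last m) (Fin.last m) = d := by
  simp [bordered]

variable {A v d}

theorem Matrix.IsSymm.bordered (hA : A.IsSymm) : (bordered A v d).IsSymm := by
  refine Matrix.IsSymm.ext fun i j ↦ ?_
  induction i using Fin.lastCases <;> induction j using Fin.lastCases <;> simp [hA.apply]

theorem bordered_nonneg (hA : ∀ i j, 0 ≤ A i j) (hv : ∀ i, 0 ≤ v i) (hd : 0 ≤ d)
    (i j : Fin (m + 1)) : 0 ≤ bordered A v d i j := by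
  induction i using Fin.lastCases <;> induction j using Fin.lastCases <;> simp [*]

theorem sum_sum_bordered (hβ : ∀ i, i ∈ β ↔ i.castSucc ∈ α) :
    ∑ i ∈ α, ∑ j ∈ α, bordered A v d i j =
      ∑ i ∈ β, ∑ j ∈ β, A i j + if Fin.last m ∈ α then 2 * ∑ i ∈ β, v i + d else 0 := by
  simp only [Fin.sum_eq_sum_castSucc_add hβ, bordered_castSucc_castSucc,
    bordered_castSucc_last, bordered_last_castSucc, bordered_last_last]
  split_ifs
  · rw [sum_add_distrib]
    ring
  · simp

end Matrix

theorem stmt_19 {m : ℕ} (A : Matrix (Fin m) (Fin m) ℝ) (hA : IsInU A) :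
    ∃ B : Matrix (Fin (m + 1)) (Fin (m + 1)) ℝ,
      IsInUtop B ∧ ∀ i j : Fin m, B i.castSucc j.castSucc = A i j := by
  obtain ⟨hsymm, hnonneg, hsum⟩ := hA
  obtain ⟨x, hx₀, hx_le, hx_univ⟩ := exists_nonneg_base_of_isSubmodular
    (isSubmodular_card_sub_sum_sum hnonneg) (fun s ↦ sub_nonneg.mpr (hsum s)) (by simp)
  have hx_half (s : Finset (Fin m)) : 2 * ∑ i ∈ s, x i / 2 = ∑ i ∈ s, x i := by
    rw [← sum_div]; ring
  have hv₀ (i : Fin m) : 0 ≤ x i / 2 := div_nonneg (hx₀ i) zero_le_two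
  refine ⟨bordered A (fun i ↦ x i / 2) 1,
    ⟨⟨hsymm.bordered, bordered_nonneg hnonneg hv₀ zero_le_one, fun α ↦ ?_⟩, ?_⟩,
    bordered_castSucc_castSucc _ _ _⟩
  · set β := α.preimage Fin.castSucc (Fin.castSucc_injective m).injOn
    have hβ (i : Fin m) : i ∈ β ↔ i.castSucc ∈ α := mem_preimage
    rw [sum_sum_bordered hβ, Fin.card_eq_card_castSucc_add hβ]
    split_ifs
    · linarith [hx_le β, hx_half β]
    · simpa using hsum β
  · rw [sum_sum_bordered (β := univ) (by simp), hx_half, hx_univ]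
    simp only [mem_univ, if_true, card_univ, Fintype.card_fin]
    push_cast
    ring
end
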